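/- Let N = exp(iα σ₁⊗σ₁) · exp(iβ σ₂⊗σ₂) · exp(iγ σ₃⊗σ₃) for real α, β, γ, let L₁, L₂ be 2×2 unitaries, and set W = (L₁ ⊗ L₂)N. Let P be the orthogonal projection of M₄(ℂ) (with inner product ⟨A,B⟩ = (1/4)Tr(A*B)) onto the traceless subspace of W(ℂI ⊗ M₂(ℂ))W* and Q the orthogonal projection onto the traceless subspace of M₂(ℂ) ⊗ ℂI. Then Tr(PQ) = sin²2β sin²2γ + sin²2α sin²2γ + sin²2α sin²2β. -/

import Mathlib

open scoped Kronecker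
open Matrix

noncomputable section

/-- `M₂(ℂ)`. -/
abbrev M2 : Type := Matrix (Fin 2) (Fin 2) ℂ

/-- `M₄(ℂ)`, identified with `M₂(ℂ) ⊗ M₂(ℂ)` via the Kronecker product. -/
abbrev M4 : Type := Matrix (Fin 2 × Fin 2) (Fin 2 × Fin 2) ℂ

/-- The Pauli matrices; `σ 0` is the identity. -/
def σ : Fin 4 → M2
  | 0 => 1
  | 1 => !![0, 1; 1, 0]
  | 2 => !![0, -Complex.I; Complex.I, 0]
  | 3 => !![1, 0; 0, -1]

/-- `N = exp(iα σ₁⊗σ₁) exp(iβ σ₂⊗σ₂) exp(iγ σ₃⊗σ₃)`. -/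
def Nmat (α β γ : ℝ) : M4 :=
  NormedSpace.exp (((α : ℂ) * Complex.I) • (σ 1 ⊗ₖ σ 1)) *
  NormedSpace.exp (((β : ℂ) * Complex.I) • (σ 2 ⊗ₖ σ 2)) *
  NormedSpace.exp (((γ : ℂ) * Complex.I) • (σ 3 ⊗ₖ σ 3))

/-- The Hilbert–Schmidt inner product `⟨x, y⟩ = τ(x* y)` on `M₄(ℂ)`,
with the normalized trace `τ = (1/4) Tr`. -/
def hsInner (x y : M4) : ℂ := (star x * y).trace / 4

/-- The traceless subspace of the subalgebra `W(ℂI ⊗ M₂(ℂ))W*` of `M₄(ℂ)`. -/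
def tracelessConjA0 (W : M4) : Submodule ℂ M4 :=
  Submodule.span ℂ {X | ∃ B : M2, B.trace = 0 ∧ X = W * ((1 : M2) ⊗ₖ B) * star W}

/-- The traceless subspace of the subalgebra `B = M₂(ℂ) ⊗ ℂI` of `M₄(ℂ)`. -/
def tracelessB : Submodule ℂ M4 :=
  Submodule.span ℂ {X | ∃ B : M2, B.trace = 0 ∧ X = B ⊗ₖ (1 : M2)}

/-- `P` is the orthogonal projection of the Hilbert space `M₄(ℂ)` (with the
Hilbert–Schmidt inner product `hsInner`) onto the subspace `S`: it maps into `S`,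
restricts to the identity on `S`, and is self-adjoint. -/
def IsOrthogonalProjectionOnto (S : Submodule ℂ M4) (P : M4 →ₗ[ℂ] M4) : Prop :=
  (∀ x, P x ∈ S) ∧ (∀ x ∈ S, P x = x) ∧ ∀ x y, hsInner (P x) y = hsInner x (P y)

/-! ### Auxiliary material -/

section Aux

/-- Index map `Fin 3 → Fin 4` selecting the non-identity Pauli matrices. -/
def pidx : Fin 3 → Fin 4 := ![1, 2, 3]

lemma σ_mul_self : ∀ j : Fin 4, σ j * σ j = 1 := by
  intro j
  fin_cases j <;>
    simp [σ, Matrix.mul_fin_two, Matrix.one_fin_two]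

lemma σ_star : ∀ j : Fin 4, star (σ j) = σ j := by
  intro j
  fin_cases j <;>
    simp [σ, Matrix.star_eq_conjTranspose] <;>
    · ext i k; fin_cases i <;> fin_cases k <;> simp [Matrix.conjTranspose_apply]

lemma σ_pair_trace : ∀ j k : Fin 3, (σ (pidx j) * σ (pidx k)).trace = if j = k then 2 else 0 := by
  intro j k
  fin_cases j <;> fin_cases k <;>
    simp [pidx, σ, Matrix.mul_fin_two, Matrix.trace_fin_two] <;> norm_num [Complex.I_mul_I]

lemma σ_traceless : ∀ j : Fin 3, (σ (pidx j)).trace = 0 := by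
  intro j; fin_cases j <;> simp [pidx, σ, Matrix.trace_fin_two]

lemma σ12 : σ 1 * σ 2 = Complex.I • σ 3 := by
  ext i k; fin_cases i <;> fin_cases k <;>
    simp [σ, Matrix.mul_apply, Fin.sum_univ_two]

lemma σ23 : σ 2 * σ 3 = Complex.I • σ 1 := by
  ext i k; fin_cases i <;> fin_cases k <;>
    simp [σ, Matrix.mul_apply, Fin.sum_univ_two]

lemma σ13 : σ 1 * σ 3 = (-Complex.I) • σ 2 := by
  ext i k; fin_cases i <;> fin_cases k <;>
    simp [σ, Matrix.mul_apply, Fin.sum_univ_two]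

lemma star_kronecker (A B : M2) : star (A ⊗ₖ B) = star A ⊗ₖ star B := by
  ext ⟨i1, i2⟩ ⟨j1, j2⟩
  simp [Matrix.star_eq_conjTranspose, Matrix.conjTranspose_apply, Matrix.kroneckerMap_apply,
    mul_comm]

/-- Kronecker powers of Pauli matrices square to one. -/
lemma K_mul_self (j : Fin 4) : (σ j ⊗ₖ σ j) * (σ j ⊗ₖ σ j) = (1 : M4) := by
  rw [← Matrix.mul_kronecker_mul, σ_mul_self, Matrix.one_kronecker_one]

lemma K12 : (σ 1 ⊗ₖ σ 1) * (σ 2 ⊗ₖ σ 2) = -(σ 3 ⊗ₖ σ 3) := by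
  rw [← Matrix.mul_kronecker_mul, σ12, Matrix.smul_kronecker, Matrix.kronecker_smul, smul_smul,
    Complex.I_mul_I, neg_one_smul]

lemma K23 : (σ 2 ⊗ₖ σ 2) * (σ 3 ⊗ₖ σ 3) = -(σ 1 ⊗ₖ σ 1) := by
  rw [← Matrix.mul_kronecker_mul, σ23, Matrix.smul_kronecker, Matrix.kronecker_smul, smul_smul,
    Complex.I_mul_I, neg_one_smul]

lemma K13 : (σ 1 ⊗ₖ σ 1) * (σ 3 ⊗ₖ σ 3) = -(σ 2 ⊗ₖ σ 2) := by
  rw [← Matrix.mul_kronecker_mul, σ13, Matrix.smul_kronecker, Matrix.kronecker_smul, smul_smul]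
  simp [Complex.I_mul_I]

/-! #### The exponential of `i θ M` for an involution `M` -/

/-- The algebra homomorphism `ℂ × ℂ → M₄(ℂ)` attached to an involution `M`. -/
def invHom (M : M4) (h : M * M = 1) : (ℂ × ℂ) →ₐ[ℂ] M4 where
  toFun x := ((x.1 + x.2) / 2) • 1 + ((x.1 - x.2) / 2) • M
  map_one' := by norm_num
  map_mul' x y := by
    simp only [Prod.fst_mul, Prod.snd_mul, add_mul, mul_add, smul_mul_assoc, mul_smul_comm,
      mul_one, one_mul, h]
    match_scalars <;> ring
  map_zero' := by simp
  map_add' x y := by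
    simp only [Prod.fst_add, Prod.snd_add]
    match_scalars <;> ring
  commutes' r := by
    simp only [Prod.algebraMap_apply, Algebra.algebraMap_eq_smul_one, Prod.smul_fst,
      Prod.smul_snd, Prod.fst_one, Prod.snd_one, smul_eq_mul, mul_one]
    match_scalars <;> ring

lemma invHom_apply (M : M4) (h : M * M = 1) (x : ℂ × ℂ) :
    invHom M h x = ((x.1 + x.2) / 2) • 1 + ((x.1 - x.2) / 2) • M := rfl

lemma exp_smul_invol (M : M4) (h : M * M = 1) (θ : ℝ) :
    NormedSpace.exp (((θ : ℂ) * Complex.I) • M)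
      = (Real.cos θ : ℂ) • 1 + ((Real.sin θ : ℂ) * Complex.I) • M := by
  letI : SeminormedRing M4 := Matrix.linftyOpSemiNormedRing
  letI : NormedRing M4 := Matrix.linftyOpNormedRing
  letI : NormedAlgebra ℂ M4 := Matrix.linftyOpNormedAlgebra
  have hf : Continuous (invHom M h) := by
    show Continuous fun x : ℂ × ℂ => ((x.1 + x.2) / 2) • (1 : M4) + ((x.1 - x.2) / 2) • M
    fun_prop
  have harg : ((θ : ℂ) * Complex.I) • M
      = invHom M h (((θ : ℂ) * Complex.I), -((θ : ℂ) * Complex.I)) := by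
    rw [invHom_apply]; match_scalars <;> ring
  have hexp : NormedSpace.exp ((((θ : ℂ) * Complex.I), -((θ : ℂ) * Complex.I)) : ℂ × ℂ)
      = (Complex.exp ((θ : ℂ) * Complex.I), Complex.exp (-((θ : ℂ) * Complex.I))) := by
    refine Prod.ext ?_ ?_
    · rw [Prod.fst_exp]; exact (Complex.exp_eq_exp_ℂ ▸ rfl)
    · rw [Prod.snd_exp]; exact (Complex.exp_eq_exp_ℂ ▸ rfl)
  rw [harg]
  refine ((NormedSpace.map_exp (invHom M h) hf _).symm).trans ?_
  rw [hexp, invHom_apply]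
  have e1 : Complex.exp ((θ : ℂ) * Complex.I)
      = (Real.cos θ : ℂ) + (Real.sin θ : ℂ) * Complex.I := by
    rw [Complex.exp_mul_I]; push_cast; ring
  have e2 : Complex.exp (-((θ : ℂ) * Complex.I))
      = (Real.cos θ : ℂ) - (Real.sin θ : ℂ) * Complex.I := by
    rw [neg_mul_eq_neg_mul, Complex.exp_mul_I, Complex.cos_neg, Complex.sin_neg]; push_cast; ring
  rw [e1, e2]
  match_scalars <;> ring

/-! #### Elementary properties of the Hilbert–Schmidt inner product -/

lemma hsInner_add_right (x y z : M4) : hsInner x (y + z) = hsInner x y + hsInner x z := by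
  simp [hsInner, mul_add, Matrix.trace_add]; ring

lemma hsInner_smul_right (c : ℂ) (x y : M4) : hsInner x (c • y) = c * hsInner x y := by
  simp [hsInner, Matrix.mul_smul, Matrix.trace_smul]; ring

lemma hsInner_conj (x y : M4) : (starRingEnd ℂ) (hsInner x y) = hsInner y x := by
  unfold hsInner
  rw [map_div₀]
  have h4 : (starRingEnd ℂ) 4 = 4 := by
    rw [show ((4 : ℂ)) = ((4 : ℝ) : ℂ) by norm_num, Complex.conj_ofReal]
  rw [h4]
  congr 1
  calc (starRingEnd ℂ) ((star x * y).trace)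
      = star ((star x * y).trace) := rfl
    _ = ((star x * y)ᴴ).trace := (Matrix.trace_conjTranspose _).symm
    _ = (yᴴ * (star x)ᴴ).trace := by rw [Matrix.conjTranspose_mul]
    _ = (star y * x).trace := by
        rw [Matrix.star_eq_conjTranspose x, Matrix.conjTranspose_conjTranspose,
          ← Matrix.star_eq_conjTranspose y]

lemma hsInner_smul_left (c : ℂ) (x y : M4) :
    hsInner (c • x) y = (starRingEnd ℂ) c * hsInner x y := by
  simp [hsInner, Matrix.smul_mul, Matrix.trace_smul]; ring

lemma hsInner_sub_left (x y z : M4) : hsInner (x - y) z = hsInner x z - hsInner y z := by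
  simp [hsInner, sub_mul, Matrix.trace_sub]; ring

lemma hsInner_sub_right (x y z : M4) : hsInner x (y - z) = hsInner x y - hsInner x z := by
  simp [hsInner, mul_sub, Matrix.trace_sub]; ring

lemma hsInner_sum_right {ι : Type*} (s : Finset ι) (x : M4) (f : ι → M4) :
    hsInner x (∑ j ∈ s, f j) = ∑ j ∈ s, hsInner x (f j) := by
  simp [hsInner, Finset.mul_sum, Matrix.trace_sum, Finset.sum_div]

lemma hsInner_sum_left {ι : Type*} (s : Finset ι) (x : M4) (f : ι → M4) :
    hsInner (∑ j ∈ s, f j) x = ∑ j ∈ s, hsInner (f j) x := by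
  simp [hsInner, star_sum, Finset.sum_mul, Matrix.trace_sum, Finset.sum_div]

lemma hsInner_self_eq_zero {x : M4} (h : hsInner x x = 0) : x = 0 := by
  have ht : (star x * x).trace = 0 := by
    have h' := h; unfold hsInner at h'
    field_simp at h'; simpa using h'
  have hsum : ∑ i : Fin 2 × Fin 2, ∑ j : Fin 2 × Fin 2, (Complex.normSq (x j i) : ℂ) = 0 := by
    rw [← ht, Matrix.trace]
    refine Finset.sum_congr rfl fun i _ => ?_
    rw [Matrix.diag_apply, Matrix.mul_apply]
    refine Finset.sum_congr rfl fun j _ => ?_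
    rw [Matrix.star_eq_conjTranspose, Matrix.conjTranspose_apply, Complex.normSq_eq_conj_mul_self]
    rfl
  have hreal : ∑ i : Fin 2 × Fin 2, ∑ j : Fin 2 × Fin 2, Complex.normSq (x j i) = 0 := by
    exact_mod_cast hsum
  ext i j
  have h1 : ∀ i ∈ (Finset.univ : Finset (Fin 2 × Fin 2)),
      ∑ j : Fin 2 × Fin 2, Complex.normSq (x j i) = 0 := by
    intro i _
    have : ∀ i ∈ (Finset.univ : Finset (Fin 2 × Fin 2)),
        0 ≤ ∑ j : Fin 2 × Fin 2, Complex.normSq (x j i) :=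
      fun i _ => Finset.sum_nonneg fun j _ => Complex.normSq_nonneg _
    exact (Finset.sum_eq_zero_iff_of_nonneg this).mp hreal i (Finset.mem_univ _)
  have h2 := (Finset.sum_eq_zero_iff_of_nonneg
    (fun r (_ : r ∈ Finset.univ) => Complex.normSq_nonneg (x r j))).mp
    (h1 j (Finset.mem_univ _)) i (Finset.mem_univ _)
  simpa using Complex.normSq_eq_zero.mp h2

/-! #### Orthogonal projections onto 3-dimensional subspaces -/

/-- The linear functional `x ↦ ⟨u, x⟩`. -/
def hsInnerFun (u : M4) : M4 →ₗ[ℂ] ℂ where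
  toFun x := hsInner u x
  map_add' x y := hsInner_add_right u x y
  map_smul' c x := by simpa using hsInner_smul_right c u x

/-- The rank-one operator `x ↦ ⟨u, x⟩ v`. -/
def rankOne (u v : M4) : M4 →ₗ[ℂ] M4 :=
  (LinearMap.toSpanSingleton ℂ M4 v).comp (hsInnerFun u)

lemma rankOne_apply (u v x : M4) : rankOne u v x = hsInner u x • v := rfl

lemma trace_rankOne (u v : M4) : LinearMap.trace ℂ M4 (rankOne u v) = hsInner u v := by
  rw [rankOne, LinearMap.trace_comp_comm']
  have : (hsInnerFun u).comp (LinearMap.toSpanSingleton ℂ M4 v)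
      = hsInner u v • LinearMap.id := by
    ext
    simp [hsInnerFun, LinearMap.toSpanSingleton_apply, hsInner_smul_right]
  rw [this, _root_.map_smul, LinearMap.trace_id, smul_eq_mul]
  simp

/-- The candidate orthogonal projection built from a list of three vectors. -/
def projMap (v : Fin 3 → M4) : M4 →ₗ[ℂ] M4 := ∑ j, rankOne (v j) (v j)

lemma projMap_apply (v : Fin 3 → M4) (x : M4) :
    projMap v x = ∑ j, hsInner (v j) x • v j := by
  simp [projMap, rankOne_apply]

lemma isOrthProj_projMap (v : Fin 3 → M4) (S : Submodule ℂ M4)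
    (hv : ∀ j, v j ∈ S) (hspan : S ≤ Submodule.span ℂ (Set.range v))
    (horth : ∀ j k, hsInner (v j) (v k) = if j = k then 1 else 0) :
    IsOrthogonalProjectionOnto S (projMap v) := by
  refine ⟨?_, ?_, ?_⟩
  · intro x
    rw [projMap_apply]
    exact Submodule.sum_mem _ fun j _ => Submodule.smul_mem _ _ (hv j)
  · intro x hx
    have hx' := hspan hx
    clear hx
    induction hx' using Submodule.span_induction with
    | mem y hy =>
      obtain ⟨j, rfl⟩ := hy
      rw [projMap_apply]
      have : ∀ k : Fin 3, hsInner (v k) (v j) • v k = (if k = j then v j else 0) := by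
        intro k
        rw [horth k j]
        split_ifs with hkj
        · subst hkj; simp
        · simp
      simp [this]
    | zero => simp
    | add a b _ _ ha hb => rw [map_add, ha, hb]
    | smul c a _ ha => rw [LinearMap.map_smul, ha]
  · intro x y
    rw [projMap_apply, projMap_apply, hsInner_sum_left, hsInner_sum_right]
    refine Finset.sum_congr rfl fun j _ => ?_
    rw [hsInner_smul_left, hsInner_smul_right, hsInner_conj]
    ring

lemma orthProj_unique {S : Submodule ℂ M4} {P P' : M4 →ₗ[ℂ] M4}
    (hP : IsOrthogonalProjectionOnto S P) (hP' : IsOrthogonalProjectionOnto S P') :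
    P = P' := by
  have key : ∀ R : M4 →ₗ[ℂ] M4, IsOrthogonalProjectionOnto S R →
      ∀ x s, s ∈ S → hsInner (x - R x) s = 0 := by
    rintro R ⟨h1, h2, h3⟩ x s hs
    rw [hsInner_sub_left, h3 x s, h2 s hs, sub_self]
  have key' : ∀ R : M4 →ₗ[ℂ] M4, IsOrthogonalProjectionOnto S R →
      ∀ x s, s ∈ S → hsInner s (x - R x) = 0 := by
    intro R hR x s hs
    rw [← hsInner_conj]
    rw [key R hR x s hs]
    simp
  refine LinearMap.ext fun x => ?_
  have hmem : P x - P' x ∈ S := sub_mem (hP.1 x) (hP'.1 x)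
  have harg : P x - P' x = (x - P' x) - (x - P x) := by abel
  have hz : hsInner (P x - P' x) (P x - P' x) = 0 := by
    calc hsInner (P x - P' x) (P x - P' x)
        = hsInner (P x - P' x) ((x - P' x) - (x - P x)) := by rw [← harg]
      _ = hsInner (P x - P' x) (x - P' x) - hsInner (P x - P' x) (x - P x) :=
          hsInner_sub_right _ _ _
      _ = 0 := by
          rw [key' P' hP' x _ hmem, key' P hP x _ hmem, sub_self]
  have := hsInner_self_eq_zero hz
  exact sub_eq_zero.mp this

/-! #### Algebraic helpers for unitary conjugation -/

lemma sandwich_mul {R : Type*} [Ring R] (W V A B : R) (h : V * W = 1) :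
    (W * A * V) * (W * B * V) = W * (A * B) * V := by
  rw [show (W * A * V) * (W * B * V) = W * A * (V * W) * B * V by noncomm_ring, h, mul_one]
  noncomm_ring

lemma trace_sandwich {n : Type*} [Fintype n] [DecidableEq n] (W V A : Matrix n n ℂ)
    (h : V * W = 1) : (W * A * V).trace = A.trace := by
  rw [Matrix.trace_mul_cycle, h]
  simp

lemma star_sandwich {n : Type*} [Fintype n] (W X : Matrix n n ℂ) (hX : star X = X) :
    star (W * X * star W) = W * X * star W := by
  rw [Matrix.star_mul, Matrix.star_mul, star_star, hX]
  exact (Matrix.mul_assoc W X (star W)).symm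

/-- Decomposition of a traceless 2×2 matrix in the Pauli basis. -/
lemma traceless_decomp (B : M2) (hB : B.trace = 0) :
    B = ((B 0 1 + B 1 0) / 2) • σ 1 + (((B 0 1 - B 1 0) / 2) * Complex.I) • σ 2
      + (B 0 0) • σ 3 := by
  have h11 : B 1 1 = -B 0 0 := by
    rw [Matrix.trace_fin_two] at hB; linear_combination hB
  ext i j
  fin_cases i <;> fin_cases j
  · simp [σ]
  · simp [σ]; ring_nf; simp [Complex.I_sq]; ring
  · simp [σ]; ring_nf; simp [Complex.I_sq]; ring
  · simp [σ, h11]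


lemma Fac_unitary (j : Fin 4) (θ : ℝ) :
    star ((Real.cos θ : ℂ) • 1 + ((Real.sin θ : ℂ) * Complex.I) • (σ j ⊗ₖ σ j)) *
      ((Real.cos θ : ℂ) • 1 + ((Real.sin θ : ℂ) * Complex.I) • (σ j ⊗ₖ σ j)) = 1 := by
  have p := Complex.sin_sq_add_cos_sq (θ : ℂ)
  simp only [star_add, star_smul, star_one, star_kronecker, σ_star, RCLike.star_def,
    _root_.map_mul, Complex.conj_ofReal, Complex.conj_I]
  simp only [add_mul, mul_add, smul_mul_assoc, mul_smul_comm, mul_one, one_mul, K_mul_self]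
  match_scalars <;> ring_nf <;>
    simp only [Complex.I_sq, Complex.ofReal_sin, Complex.ofReal_cos] <;>
    try linear_combination p


lemma Nmat_eq (α β γ : ℝ) :
    Nmat α β γ
      = ((Real.cos α : ℂ) * Real.cos β * Real.cos γ
          + Complex.I * Real.sin α * Real.sin β * Real.sin γ) • (1 : M4)
        + (Complex.I * Real.sin α * Real.cos β * Real.cos γ
          + (Real.cos α : ℂ) * Real.sin β * Real.sin γ) • (σ 1 ⊗ₖ σ 1)
        + (Complex.I * Real.cos α * Real.sin β * Real.cos γ
          + (Real.sin α : ℂ) * Real.cos β * Real.sin γ) • (σ 2 ⊗ₖ σ 2)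
        + (Complex.I * Real.cos α * Real.cos β * Real.sin γ
          + (Real.sin α : ℂ) * Real.sin β * Real.cos γ) • (σ 3 ⊗ₖ σ 3) := by
  have hI3 : Complex.I ^ 3 = -Complex.I := by
    rw [pow_succ, Complex.I_sq]; ring
  rw [Nmat, exp_smul_invol _ (K_mul_self 1), exp_smul_invol _ (K_mul_self 2),
    exp_smul_invol _ (K_mul_self 3)]
  simp only [add_mul, mul_add, smul_mul_assoc, mul_smul_comm, mul_one, one_mul,
    K12, K13, K23, K_mul_self, mul_neg, neg_mul, smul_neg]
  match_scalars <;> ring_nf <;> (try simp only [hI3, Complex.I_sq]) <;> (try ring1)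

lemma star_Nmat_eq (α β γ : ℝ) :
    star (Nmat α β γ)
      = ((Real.cos α : ℂ) * Real.cos β * Real.cos γ
          - Complex.I * Real.sin α * Real.sin β * Real.sin γ) • (1 : M4)
        + ((Real.cos α : ℂ) * Real.sin β * Real.sin γ
          - Complex.I * Real.sin α * Real.cos β * Real.cos γ) • (σ 1 ⊗ₖ σ 1)
        + ((Real.sin α : ℂ) * Real.cos β * Real.sin γ
          - Complex.I * Real.cos α * Real.sin β * Real.cos γ) • (σ 2 ⊗ₖ σ 2)
        + ((Real.sin α : ℂ) * Real.sin β * Real.cos γ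
          - Complex.I * Real.cos α * Real.cos β * Real.sin γ) • (σ 3 ⊗ₖ σ 3) := by
  have hI3 : Complex.I ^ 3 = -Complex.I := by
    rw [pow_succ, Complex.I_sq]; ring
  rw [Nmat_eq]
  simp only [star_add, star_smul, star_one, star_kronecker, σ_star, RCLike.star_def,
    map_add, _root_.map_mul, Complex.conj_ofReal, Complex.conj_I]
  match_scalars <;> ring_nf <;> (try simp only [hI3, Complex.I_sq]) <;> (try ring1)


lemma overlap00 (α β γ : ℝ) :
    ((σ 1 ⊗ₖ (1 : M2)) * (Nmat α β γ * ((1 : M2) ⊗ₖ σ 1) * star (Nmat α β γ))).trace / 4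
      = ((Real.sin (2*β) * Real.sin (2*γ) : ℝ) : ℂ) := by
  have pa := Complex.sin_sq_add_cos_sq (α : ℂ)
  have pb := Complex.sin_sq_add_cos_sq (β : ℂ)
  have pg := Complex.sin_sq_add_cos_sq (γ : ℂ)
  rw [star_Nmat_eq, Nmat_eq]
  simp only [Real.sin_two_mul, Complex.ofReal_mul, Complex.ofReal_ofNat,
    Complex.ofReal_sin, Complex.ofReal_cos]
  simp only [add_mul, mul_add, smul_mul_assoc, mul_smul_comm, mul_one, one_mul,
    ← Matrix.mul_kronecker_mul]
  simp only [Matrix.trace_add, Matrix.trace_smul, Matrix.trace_kronecker, smul_eq_mul]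
  simp [σ, Matrix.mul_fin_two, Matrix.trace_fin_two, Matrix.one_fin_two]
  try ring_nf
  try simp [Complex.I_sq, pow_succ]
  try ring_nf
  try linear_combination (4 * Complex.cos (β:ℂ) * Complex.sin (β:ℂ) * Complex.cos (γ:ℂ) * Complex.sin (γ:ℂ)) * pa
  try ring1

lemma overlap01 (α β γ : ℝ) :
    ((σ 2 ⊗ₖ (1 : M2)) * (Nmat α β γ * ((1 : M2) ⊗ₖ σ 1) * star (Nmat α β γ))).trace / 4
      = (0 : ℂ) := by
  have pa := Complex.sin_sq_add_cos_sq (α : ℂ)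
  have pb := Complex.sin_sq_add_cos_sq (β : ℂ)
  have pg := Complex.sin_sq_add_cos_sq (γ : ℂ)
  rw [star_Nmat_eq, Nmat_eq]
  simp only [Real.sin_two_mul, Complex.ofReal_mul, Complex.ofReal_ofNat,
    Complex.ofReal_sin, Complex.ofReal_cos]
  simp only [add_mul, mul_add, smul_mul_assoc, mul_smul_comm, mul_one, one_mul,
    ← Matrix.mul_kronecker_mul]
  simp only [Matrix.trace_add, Matrix.trace_smul, Matrix.trace_kronecker, smul_eq_mul]
  simp [σ, Matrix.mul_fin_two, Matrix.trace_fin_two, Matrix.one_fin_two]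
  try ring_nf
  try simp [Complex.I_sq, pow_succ]
  try ring_nf
  try ring1

lemma overlap02 (α β γ : ℝ) :
    ((σ 3 ⊗ₖ (1 : M2)) * (Nmat α β γ * ((1 : M2) ⊗ₖ σ 1) * star (Nmat α β γ))).trace / 4
      = (0 : ℂ) := by
  have pa := Complex.sin_sq_add_cos_sq (α : ℂ)
  have pb := Complex.sin_sq_add_cos_sq (β : ℂ)
  have pg := Complex.sin_sq_add_cos_sq (γ : ℂ)
  rw [star_Nmat_eq, Nmat_eq]
  simp only [Real.sin_two_mul, Complex.ofReal_mul, Complex.ofReal_ofNat,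
    Complex.ofReal_sin, Complex.ofReal_cos]
  simp only [add_mul, mul_add, smul_mul_assoc, mul_smul_comm, mul_one, one_mul,
    ← Matrix.mul_kronecker_mul]
  simp only [Matrix.trace_add, Matrix.trace_smul, Matrix.trace_kronecker, smul_eq_mul]
  simp [σ, Matrix.mul_fin_two, Matrix.trace_fin_two, Matrix.one_fin_two]
  try ring_nf
  try simp [Complex.I_sq, pow_succ]
  try ring_nf
  try ring1

lemma overlap10 (α β γ : ℝ) :
    ((σ 1 ⊗ₖ (1 : M2)) * (Nmat α β γ * ((1 : M2) ⊗ₖ σ 2) * star (Nmat α β γ))).trace / 4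
      = (0 : ℂ) := by
  have pa := Complex.sin_sq_add_cos_sq (α : ℂ)
  have pb := Complex.sin_sq_add_cos_sq (β : ℂ)
  have pg := Complex.sin_sq_add_cos_sq (γ : ℂ)
  rw [star_Nmat_eq, Nmat_eq]
  simp only [Real.sin_two_mul, Complex.ofReal_mul, Complex.ofReal_ofNat,
    Complex.ofReal_sin, Complex.ofReal_cos]
  simp only [add_mul, mul_add, smul_mul_assoc, mul_smul_comm, mul_one, one_mul,
    ← Matrix.mul_kronecker_mul]
  simp only [Matrix.trace_add, Matrix.trace_smul, Matrix.trace_kronecker, smul_eq_mul]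
  simp [σ, Matrix.mul_fin_two, Matrix.trace_fin_two, Matrix.one_fin_two]
  try ring_nf
  try simp [Complex.I_sq, pow_succ]
  try ring_nf
  try ring1

lemma overlap11 (α β γ : ℝ) :
    ((σ 2 ⊗ₖ (1 : M2)) * (Nmat α β γ * ((1 : M2) ⊗ₖ σ 2) * star (Nmat α β γ))).trace / 4
      = ((Real.sin (2*α) * Real.sin (2*γ) : ℝ) : ℂ) := by
  have pa := Complex.sin_sq_add_cos_sq (α : ℂ)
  have pb := Complex.sin_sq_add_cos_sq (β : ℂ)
  have pg := Complex.sin_sq_add_cos_sq (γ : ℂ)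
  rw [star_Nmat_eq, Nmat_eq]
  simp only [Real.sin_two_mul, Complex.ofReal_mul, Complex.ofReal_ofNat,
    Complex.ofReal_sin, Complex.ofReal_cos]
  simp only [add_mul, mul_add, smul_mul_assoc, mul_smul_comm, mul_one, one_mul,
    ← Matrix.mul_kronecker_mul]
  simp only [Matrix.trace_add, Matrix.trace_smul, Matrix.trace_kronecker, smul_eq_mul]
  simp [σ, Matrix.mul_fin_two, Matrix.trace_fin_two, Matrix.one_fin_two]
  try ring_nf
  try simp [Complex.I_sq, pow_succ]
  try ring_nf
  try linear_combination (4 * Complex.cos (α:ℂ) * Complex.sin (α:ℂ) * Complex.cos (γ:ℂ) * Complex.sin (γ:ℂ)) * pb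
  try ring1

lemma overlap12 (α β γ : ℝ) :
    ((σ 3 ⊗ₖ (1 : M2)) * (Nmat α β γ * ((1 : M2) ⊗ₖ σ 2) * star (Nmat α β γ))).trace / 4
      = (0 : ℂ) := by
  have pa := Complex.sin_sq_add_cos_sq (α : ℂ)
  have pb := Complex.sin_sq_add_cos_sq (β : ℂ)
  have pg := Complex.sin_sq_add_cos_sq (γ : ℂ)
  rw [star_Nmat_eq, Nmat_eq]
  simp only [Real.sin_two_mul, Complex.ofReal_mul, Complex.ofReal_ofNat,
    Complex.ofReal_sin, Complex.ofReal_cos]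
  simp only [add_mul, mul_add, smul_mul_assoc, mul_smul_comm, mul_one, one_mul,
    ← Matrix.mul_kronecker_mul]
  simp only [Matrix.trace_add, Matrix.trace_smul, Matrix.trace_kronecker, smul_eq_mul]
  simp [σ, Matrix.mul_fin_two, Matrix.trace_fin_two, Matrix.one_fin_two]
  try ring_nf
  try simp [Complex.I_sq, pow_succ]
  try ring_nf
  try ring1

lemma overlap20 (α β γ : ℝ) :
    ((σ 1 ⊗ₖ (1 : M2)) * (Nmat α β γ * ((1 : M2) ⊗ₖ σ 3) * star (Nmat α β γ))).trace / 4
      = (0 : ℂ) := by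
  have pa := Complex.sin_sq_add_cos_sq (α : ℂ)
  have pb := Complex.sin_sq_add_cos_sq (β : ℂ)
  have pg := Complex.sin_sq_add_cos_sq (γ : ℂ)
  rw [star_Nmat_eq, Nmat_eq]
  simp only [Real.sin_two_mul, Complex.ofReal_mul, Complex.ofReal_ofNat,
    Complex.ofReal_sin, Complex.ofReal_cos]
  simp only [add_mul, mul_add, smul_mul_assoc, mul_smul_comm, mul_one, one_mul,
    ← Matrix.mul_kronecker_mul]
  simp only [Matrix.trace_add, Matrix.trace_smul, Matrix.trace_kronecker, smul_eq_mul]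
  simp [σ, Matrix.mul_fin_two, Matrix.trace_fin_two, Matrix.one_fin_two]
  try ring_nf
  try simp [Complex.I_sq, pow_succ]
  try ring_nf
  try ring1

lemma overlap21 (α β γ : ℝ) :
    ((σ 2 ⊗ₖ (1 : M2)) * (Nmat α β γ * ((1 : M2) ⊗ₖ σ 3) * star (Nmat α β γ))).trace / 4
      = (0 : ℂ) := by
  have pa := Complex.sin_sq_add_cos_sq (α : ℂ)
  have pb := Complex.sin_sq_add_cos_sq (β : ℂ)
  have pg := Complex.sin_sq_add_cos_sq (γ : ℂ)
  rw [star_Nmat_eq, Nmat_eq]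
  simp only [Real.sin_two_mul, Complex.ofReal_mul, Complex.ofReal_ofNat,
    Complex.ofReal_sin, Complex.ofReal_cos]
  simp only [add_mul, mul_add, smul_mul_assoc, mul_smul_comm, mul_one, one_mul,
    ← Matrix.mul_kronecker_mul]
  simp only [Matrix.trace_add, Matrix.trace_smul, Matrix.trace_kronecker, smul_eq_mul]
  simp [σ, Matrix.mul_fin_two, Matrix.trace_fin_two, Matrix.one_fin_two]
  try ring_nf
  try simp [Complex.I_sq, pow_succ]
  try ring_nf
  try ring1

lemma overlap22 (α β γ : ℝ) :
    ((σ 3 ⊗ₖ (1 : M2)) * (Nmat α β γ * ((1 : M2) ⊗ₖ σ 3) * star (Nmat α β γ))).trace / 4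
      = ((Real.sin (2*α) * Real.sin (2*β) : ℝ) : ℂ) := by
  have pa := Complex.sin_sq_add_cos_sq (α : ℂ)
  have pb := Complex.sin_sq_add_cos_sq (β : ℂ)
  have pg := Complex.sin_sq_add_cos_sq (γ : ℂ)
  rw [star_Nmat_eq, Nmat_eq]
  simp only [Real.sin_two_mul, Complex.ofReal_mul, Complex.ofReal_ofNat,
    Complex.ofReal_sin, Complex.ofReal_cos]
  simp only [add_mul, mul_add, smul_mul_assoc, mul_smul_comm, mul_one, one_mul,
    ← Matrix.mul_kronecker_mul]
  simp only [Matrix.trace_add, Matrix.trace_smul, Matrix.trace_kronecker, smul_eq_mul]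
  simp [σ, Matrix.mul_fin_two, Matrix.trace_fin_two, Matrix.one_fin_two]
  try ring_nf
  try simp [Complex.I_sq, pow_succ]
  try ring_nf
  try linear_combination (4 * Complex.cos (α:ℂ) * Complex.sin (α:ℂ) * Complex.cos (β:ℂ) * Complex.sin (β:ℂ)) * pg
  try ring1

/-- The diagonal overlap values. -/
def dval (α β γ : ℝ) : Fin 3 → ℝ :=
  ![Real.sin (2*β) * Real.sin (2*γ), Real.sin (2*α) * Real.sin (2*γ),
    Real.sin (2*α) * Real.sin (2*β)]

lemma overlap_value (α β γ : ℝ) (j k : Fin 3) :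
    ((σ (pidx k) ⊗ₖ (1 : M2)) * (Nmat α β γ * ((1 : M2) ⊗ₖ σ (pidx j))
        * star (Nmat α β γ))).trace / 4
      = if j = k then ((dval α β γ j : ℝ) : ℂ) else 0 := by
  fin_cases j <;> fin_cases k
  · exact overlap00 α β γ
  · exact overlap01 α β γ
  · exact overlap02 α β γ
  · exact overlap10 α β γ
  · exact overlap11 α β γ
  · exact overlap12 α β γ
  · exact overlap20 α β γ
  · exact overlap21 α β γ
  · exact overlap22 α β γ

end Aux

/-- with `W = (L₁ ⊗ L₂) N`, `P` the orthogonal projection of `M₄(ℂ)` onto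
the traceless subspace of `W(ℂI ⊗ M₂(ℂ))W*` and `Q` the orthogonal projection onto the
traceless subspace of `M₂(ℂ) ⊗ ℂI`, one has
`Tr(PQ) = sin²2β sin²2γ + sin²2α sin²2γ + sin²2α sin²2β`. -/
theorem trace_P_comp_Q (α β γ : ℝ) (L₁ L₂ : M2)
    (h₁ : L₁ ∈ unitary M2) (h₂ : L₂ ∈ unitary M2)
    (P Q : M4 →ₗ[ℂ] M4)
    (hP : IsOrthogonalProjectionOnto (tracelessConjA0 ((L₁ ⊗ₖ L₂) * Nmat α β γ)) P)
    (hQ : IsOrthogonalProjectionOnto tracelessB Q) :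
    LinearMap.trace ℂ M4 (P ∘ₗ Q) =
      ((Real.sin (2 * β) ^ 2 * Real.sin (2 * γ) ^ 2
        + Real.sin (2 * α) ^ 2 * Real.sin (2 * γ) ^ 2
        + Real.sin (2 * α) ^ 2 * Real.sin (2 * β) ^ 2 : ℝ) : ℂ) := by
  obtain ⟨hL₁a, hL₁b⟩ := Unitary.mem_iff.mp h₁
  obtain ⟨hL₂a, hL₂b⟩ := Unitary.mem_iff.mp h₂
  set N : M4 := Nmat α β γ with hN
  set U : M4 := L₁ ⊗ₖ L₂ with hU
  -- unitarity
  have hNunit : star N * N = 1 := by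
    rw [hN, Nmat, exp_smul_invol _ (K_mul_self 1), exp_smul_invol _ (K_mul_self 2),
      exp_smul_invol _ (K_mul_self 3)]
    set F1 : M4 := (Real.cos α : ℂ) • 1 + ((Real.sin α : ℂ) * Complex.I) • (σ 1 ⊗ₖ σ 1)
    set F2 : M4 := (Real.cos β : ℂ) • 1 + ((Real.sin β : ℂ) * Complex.I) • (σ 2 ⊗ₖ σ 2)
    set F3 : M4 := (Real.cos γ : ℂ) • 1 + ((Real.sin γ : ℂ) * Complex.I) • (σ 3 ⊗ₖ σ 3)
    have u1 : star F1 * F1 = 1 := Fac_unitary 1 α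
    have u2 : star F2 * F2 = 1 := Fac_unitary 2 β
    have u3 : star F3 * F3 = 1 := Fac_unitary 3 γ
    rw [Matrix.star_mul, Matrix.star_mul]
    rw [show star F3 * (star F2 * star F1) * (F1 * F2 * F3)
        = star F3 * (star F2 * ((star F1 * F1) * F2)) * F3 from by noncomm_ring, u1, one_mul,
      u2, mul_one, u3]
  have hUunit : star U * U = 1 := by
    rw [hU, star_kronecker, ← Matrix.mul_kronecker_mul, hL₁a, hL₂a, Matrix.one_kronecker_one]
  set W : M4 := U * N with hW
  have hWa : star W * W = 1 := by
    rw [hW, Matrix.star_mul]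
    rw [show star N * star U * (U * N) = star N * ((star U * U) * N) from by noncomm_ring,
      hUunit, one_mul, hNunit]
  have hWb : W * star W = 1 := mul_eq_one_comm.mp hWa
  set g : Fin 3 → M4 := fun j => W * ((1 : M2) ⊗ₖ σ (pidx j)) * star W with hg
  set f : Fin 3 → M4 := fun k => (L₁ * σ (pidx k) * star L₁) ⊗ₖ (1 : M2) with hf
  have hstarg : ∀ j, star (g j) = g j := fun j =>
    star_sandwich W _ (by rw [star_kronecker, star_one, σ_star])
  have hstarf : ∀ k, star (f k) = f k := fun k => by
    show star ((L₁ * σ (pidx k) * star L₁) ⊗ₖ (1 : M2)) = _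
    rw [star_kronecker, star_one, star_sandwich L₁ _ (σ_star _)]
  -- P is the projection onto span g
  have hPg : IsOrthogonalProjectionOnto (tracelessConjA0 W) (projMap g) := by
    apply isOrthProj_projMap
    · intro j
      exact Submodule.subset_span ⟨σ (pidx j), σ_traceless j, rfl⟩
    · rw [tracelessConjA0, Submodule.span_le]
      rintro X ⟨B, hB, rfl⟩
      have hd := traceless_decomp B hB
      have hdec : W * ((1 : M2) ⊗ₖ B) * star W
          = ((B 0 1 + B 1 0) / 2) • g 0 + (((B 0 1 - B 1 0) / 2) * Complex.I) • g 1
            + (B 0 0) • g 2 := by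
        conv_lhs => rw [hd]
        simp only [Matrix.kronecker_add, Matrix.kronecker_smul, mul_add, add_mul,
          mul_smul_comm, smul_mul_assoc, hg]
        rfl
      rw [SetLike.mem_coe, hdec]
      refine Submodule.add_mem _ (Submodule.add_mem _ ?_ ?_) ?_ <;>
        exact Submodule.smul_mem _ _ (Submodule.subset_span ⟨_, rfl⟩)
    · intro j k
      show (star (g j) * g k).trace / 4 = _
      rw [hstarg j, hg]
      simp only []
      rw [sandwich_mul W (star W) _ _ hWa, trace_sandwich W (star W) _ hWa,
        ← Matrix.mul_kronecker_mul, Matrix.trace_kronecker, σ_pair_trace j k]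
      split_ifs <;> norm_num [Matrix.trace_one]
  -- Q is the projection onto span f
  have hQf : IsOrthogonalProjectionOnto tracelessB (projMap f) := by
    apply isOrthProj_projMap
    · intro k
      refine Submodule.subset_span ⟨L₁ * σ (pidx k) * star L₁, ?_, rfl⟩
      rw [trace_sandwich L₁ (star L₁) _ hL₁a, σ_traceless]
    · rw [tracelessB, Submodule.span_le]
      rintro X ⟨B, hB, rfl⟩
      set C : M2 := star L₁ * B * L₁ with hC
      have hCt : C.trace = 0 := by
        rw [hC, trace_sandwich (star L₁) L₁ _ hL₁b, hB]
      have hBC : B = L₁ * C * star L₁ := by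
        rw [hC, show L₁ * (star L₁ * B * L₁) * star L₁
          = (L₁ * star L₁) * B * (L₁ * star L₁) from by noncomm_ring, hL₁b, one_mul, mul_one]
      have hdec : B ⊗ₖ (1 : M2)
          = ((C 0 1 + C 1 0) / 2) • f 0 + (((C 0 1 - C 1 0) / 2) * Complex.I) • f 1
            + (C 0 0) • f 2 := by
        conv_lhs => rw [hBC]
        conv_lhs => rw [traceless_decomp C hCt]
        simp only [mul_add, add_mul, mul_smul_comm, smul_mul_assoc, Matrix.add_kronecker,
          Matrix.smul_kronecker, hf]
        rfl
      rw [SetLike.mem_coe, hdec]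
      refine Submodule.add_mem _ (Submodule.add_mem _ ?_ ?_) ?_ <;>
        exact Submodule.smul_mem _ _ (Submodule.subset_span ⟨_, rfl⟩)
    · intro j k
      show (star (f j) * f k).trace / 4 = _
      rw [hstarf j, hf]
      simp only []
      rw [← Matrix.mul_kronecker_mul, sandwich_mul L₁ (star L₁) _ _ hL₁a,
        Matrix.trace_kronecker, trace_sandwich L₁ (star L₁) _ hL₁a, σ_pair_trace j k]
      split_ifs <;> norm_num [Matrix.trace_one]
  have hPeq : P = projMap g := orthProj_unique hP hPg
  have hQeq : Q = projMap f := orthProj_unique hQ hQf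
  rw [hPeq, hQeq]
  -- the composite and its trace
  have hcomp : projMap g ∘ₗ projMap f
      = ∑ j, ∑ k, hsInner (g j) (f k) • rankOne (f k) (g j) := by
    refine LinearMap.ext fun x => ?_
    simp only [LinearMap.comp_apply, projMap_apply, LinearMap.sum_apply, LinearMap.smul_apply,
      rankOne_apply, hsInner_sum_right, hsInner_smul_right, Finset.sum_smul]
    refine Finset.sum_congr rfl fun j _ => Finset.sum_congr rfl fun k _ => ?_
    rw [mul_comm, smul_smul]
  rw [hcomp]
  simp only [map_sum, _root_.map_smul, trace_rankOne, smul_eq_mul]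
  -- the overlap values
  have hred : ∀ j k : Fin 3, hsInner (g j) (f k)
      = ((σ (pidx k) ⊗ₖ (1 : M2)) * (N * ((1 : M2) ⊗ₖ σ (pidx j)) * star N)).trace / 4 := by
    intro j k
    show (star (g j) * f k).trace / 4 = _
    rw [hstarg j]
    congr 1
    have hgU : g j = U * (N * ((1 : M2) ⊗ₖ σ (pidx j)) * star N) * star U := by
      rw [hg]
      simp only []
      rw [hW, Matrix.star_mul]
      noncomm_ring
    have hUf : star U * f k * U = σ (pidx k) ⊗ₖ (1 : M2) := by
      rw [hU, hf]
      simp only []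
      rw [star_kronecker, ← Matrix.mul_kronecker_mul, ← Matrix.mul_kronecker_mul,
        show star L₂ * 1 * L₂ = 1 from by rw [mul_one, hL₂a],
        show star L₁ * (L₁ * σ (pidx k) * star L₁) * L₁
          = (star L₁ * L₁) * σ (pidx k) * (star L₁ * L₁) from by noncomm_ring, hL₁a,
        one_mul, mul_one]
    set M : M4 := N * ((1 : M2) ⊗ₖ σ (pidx j)) * star N with hM
    calc (g j * f k).trace
        = ((U * M * star U) * f k).trace := by rw [hgU]
      _ = ((star U * f k) * (U * M)).trace := by
          rw [show (U * M * star U) * f k = (U * M) * (star U * f k) from by noncomm_ring,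
            Matrix.trace_mul_comm]
      _ = (((star U * f k) * U) * M).trace := by congr 1; noncomm_ring
      _ = ((σ (pidx k) ⊗ₖ (1 : M2)) * M).trace := by
          rw [show (star U * f k) * U = star U * f k * U from rfl, hUf]
  have hval : ∀ j k : Fin 3, hsInner (g j) (f k)
      = if j = k then ((dval α β γ j : ℝ) : ℂ) else 0 := by
    intro j k
    rw [hred j k, hN]
    exact overlap_value α β γ j k
  have hval2 : ∀ j k : Fin 3, hsInner (f k) (g j)
      = if j = k then ((dval α β γ j : ℝ) : ℂ) else 0 := by
    intro j k
    rw [← hsInner_conj, hval j k]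
    split_ifs <;> simp [Complex.conj_ofReal]
  simp only [hval, hval2]
  rw [Fin.sum_univ_three]
  simp only [Fin.sum_univ_three, if_true, reduceIte]
  norm_num [dval]
  push_cast
  ring
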